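/- For a mixed base β and nonnegative integers n, h, let r(n,h) = (n+h) ⊖ (n⊕h) and let r_1(n,h) be the digit of r(n,h) at position 1. Then the quotient of n+h by β_0 equals (quotient of n by β_0) + (quotient of h by β_0) + r_1(n,h). -/

import Mathlib

open scoped BigOperators

/-- β̂_L = β_0 ⋯ β_{L-1}, the place value of digit L in mixed base β. -/
def bhat (β : ℕ → ℕ) (L : ℕ) : ℕ := ∏ i ∈ Finset.range L, β i

/-- The L-th digit of n in the mixed base β. -/
def mdigit (β : ℕ → ℕ) (n L : ℕ) : ℕ := n / bhat β L % β L

/-- Digit-wise addition modulo β_L in mixed base β. -/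
def moplus (β : ℕ → ℕ) (n h : ℕ) : ℕ :=
  ∑ L ∈ Finset.range (n + h + 1), ((mdigit β n L + mdigit β h L) % β L) * bhat β L

/-- Digit-wise subtraction modulo β_L in mixed base β. -/
def mominus (β : ℕ → ℕ) (n h : ℕ) : ℕ :=
  ∑ L ∈ Finset.range (n + h + 1), ((β L + mdigit β n L - mdigit β h L) % β L) * bhat β L

/-- σ_β(X) = x^0 ⊕ ⋯ ⊕ x^{m-1}: the digit-wise Nim sum in mixed base β. -/
def msigma (β : ℕ → ℕ) {m : ℕ} (X : Fin m → ℕ) : ℕ :=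
  ∑ L ∈ Finset.range (∑ i, X i + 1), ((∑ i, mdigit β (X i) L) % β L) * bhat β L

/-- Hamming weight: number of nonzero components. -/
def hamwt {m : ℕ} (C : Fin m → ℕ) : ℕ := (Finset.univ.filter (fun i => C i ≠ 0)).card

/-- ord_β(n): the largest L with β̂_L ∣ n (⊤ for n = 0). -/
def mord (β : ℕ → ℕ) (n : ℕ) : ℕ∞ :=
  if n = 0 then ⊤ else (Nat.findGreatest (fun L => bhat β L ∣ n) n : ℕ∞)

/-- 𝒞 is a Sprague-Grundy system of σ_β: its members are nonzero moves and
σ_β satisfies the mex recursion of the take-away game Γ(ℕ^m, 𝒞), i.e. σ_β is the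
Sprague-Grundy function of that game. -/
def IsSGSystem (β : ℕ → ℕ) {m : ℕ} (𝒞 : Set (Fin m → ℕ)) : Prop :=
  (∀ C ∈ 𝒞, C ≠ 0) ∧
  ∀ X : Fin m → ℕ, msigma β X =
    sInf {n : ℕ | ∀ C ∈ 𝒞, (∀ i, C i ≤ X i) → msigma β (fun i => X i - C i) ≠ n}

/-!
Digit 1 of `r(n,h)` is the carry out of digit 0 in the addition `n + h`: the digits of `n ⊕ h`
and `n + h` at position 1 are `(n₁ + h₁) mod β₁` and `(n₁ + h₁ + c) mod β₁`, where
`c ∈ {0, 1}` is that carry, so their difference modulo `β₁` is `c`. The claim is then the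
division identity `⌊(n+h)/β₀⌋ = ⌊n/β₀⌋ + ⌊h/β₀⌋ + c`.
-/

open Finset

section MixedRadix

variable {β : ℕ → ℕ}

lemma bhat_succ (β : ℕ → ℕ) (k : ℕ) : bhat β (k + 1) = bhat β k * β k :=
  prod_range_succ β k

lemma bhat_one (β : ℕ → ℕ) : bhat β 1 = β 0 := by
  simp [bhat]

lemma bhat_pos (hβ : ∀ L, 0 < β L) (k : ℕ) : 0 < bhat β k :=
  prod_pos fun i _ => hβ i

lemma bhat_dvd_bhat (β : ℕ → ℕ) {k L : ℕ} (hkL : k ≤ L) : bhat β k ∣ bhat β L :=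
  prod_dvd_prod_of_subset _ _ _ (range_subset_range.2 hkL)

lemma mdigit_one (β : ℕ → ℕ) (x : ℕ) : mdigit β x 1 = x / β 0 % β 1 := by
  rw [mdigit, bhat_one]

lemma sum_mul_bhat_lt_bhat {c : ℕ → ℕ} (hc : ∀ L, c L < β L) (k : ℕ) :
    ∑ L ∈ range k, c L * bhat β L < bhat β k := by
  induction k with
  | zero => simp [bhat]
  | succ k ih =>
    rw [sum_range_succ, bhat_succ]
    calc ∑ L ∈ range k, c L * bhat β L + c k * bhat β k
        < (c k + 1) * bhat β k := by rw [add_one_mul]; omega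
      _ ≤ bhat β k * β k := by rw [mul_comm]; exact Nat.mul_le_mul_left _ (hc k)

lemma mdigit_sum_mul_bhat {c : ℕ → ℕ} (hc : ∀ L, c L < β L) {N k : ℕ} (hk : k < N) :
    mdigit β (∑ L ∈ range N, c L * bhat β L) k = c k := by
  have hb := bhat_pos (fun L => (Nat.zero_le _).trans_lt (hc L)) k
  obtain ⟨Q, hQ⟩ : bhat β (k + 1) ∣ ∑ L ∈ Ico (k + 1) N, c L * bhat β L :=
    dvd_sum fun L hL => dvd_mul_of_dvd_right (bhat_dvd_bhat β (mem_Ico.1 hL).1) _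
  rw [mdigit, ← sum_range_add_sum_Ico _ hk, hQ, bhat_succ, sum_range_succ, mul_assoc,
    Nat.add_mul_div_left _ _ hb, Nat.add_mul_div_right _ _ hb,
    Nat.div_eq_of_lt (sum_mul_bhat_lt_bhat hc k), zero_add, Nat.add_mul_mod_self_left,
    Nat.mod_eq_of_lt (hc k)]

lemma mdigit_moplus (hβ : ∀ L, 0 < β L) {n h L : ℕ} (hL : L ≤ n + h) :
    mdigit β (moplus β n h) L = (mdigit β n L + mdigit β h L) % β L :=
  mdigit_sum_mul_bhat (fun L => Nat.mod_lt _ (hβ L)) (Nat.lt_succ_of_le hL)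

lemma mdigit_mominus (hβ : ∀ L, 0 < β L) {n h L : ℕ} (hL : L ≤ n + h) :
    mdigit β (mominus β n h) L = (β L + mdigit β n L - mdigit β h L) % β L :=
  mdigit_sum_mul_bhat (fun L => Nat.mod_lt _ (hβ L)) (Nat.lt_succ_of_le hL)

end MixedRadix

lemma add_mod_sub_mod_mod {m x r : ℕ} (hr : r < m) : (m + (x + r) % m - x % m) % m = r := by
  have hs : x % m < m := Nat.mod_lt _ (by omega)
  rw [Nat.add_mod x r, Nat.mod_eq_of_lt hr]
  rcases lt_or_ge (x % m + r) m with hlt | hge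
  · rw [Nat.mod_eq_of_lt hlt, show m + (x % m + r) - x % m = r + m by omega, Nat.add_mod_right,
      Nat.mod_eq_of_lt hr]
  · rw [Nat.mod_eq_sub_mod hge, Nat.mod_eq_of_lt (a := x % m + r - m) (by omega),
      show m + (x % m + r - m) - x % m = r by omega, Nat.mod_eq_of_lt hr]

/-- ⌊(n+h)/β₀⌋ = ⌊n/β₀⌋ + ⌊h/β₀⌋ + r₁(n,h). -/
theorem stmt1 (β : ℕ → ℕ) (hβ : ∀ L, 2 ≤ β L) (n h : ℕ) :
    (n + h) / β 0 =
      n / β 0 + h / β 0 + mdigit β (mominus β (n + h) (moplus β n h)) 1 := by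
  rcases Nat.eq_zero_or_pos (n + h) with hnh | hnh
  · obtain ⟨rfl, rfl⟩ : n = 0 ∧ h = 0 := by omega
    simp [moplus, mominus, mdigit]
  have hβpos : ∀ L, 0 < β L := fun L => by have := hβ L; omega
  rw [mdigit_mominus hβpos (by omega), mdigit_moplus hβpos hnh, mdigit_one, mdigit_one,
    mdigit_one, ← Nat.add_mod, Nat.add_div (hβpos 0)]
  have hcarry : (if β 0 ≤ n % β 0 + h % β 0 then 1 else 0) < β 1 := by
    have := hβ 1; split <;> omega
  rw [add_mod_sub_mod_mod hcarry]
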